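/- arXiv:2508.00276 — 2 statements merged into one kernel-verified Lean document; each statement's English description precedes it below -/
import Mathlib

section
/- Let k ≥ 3 be an integer, let C = ℓ_1 ∨ ⋯ ∨ ℓ_k be a clause of width k over k distinct variables x_1, …, x_k, and let α_start, α_end : {x_1,…,x_k} → {0,1} be satisfying assignments for C. Let γ : {x_1,…,x_k} → {0,1} be a uniformly random assignment and, conditioned on γ, let the reconfiguration sequence σ be uniformly distributed over 𝒜(α_start ↔ γ ↔ α_end). Then the probability that σ satisfies C is at least 1 - 1/(k-1) - 1/k. -/
/-- A literal is a variable together with a polarity (`true` = positive);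
a clause is a disjunction of literals, represented as the list of its literals
(its width is the length of this list). -/
abbrev Clause (V : Type) := List (V × Bool)

/-- An assignment satisfies a clause if it makes at least one literal true. -/
def satClause {V : Type} (α : V → Bool) (C : Clause V) : Bool :=
  C.any fun l => α l.1 == l.2

/-- The irredundant reconfiguration sequence from `α` towards `β` obtained by flipping the
variables listed in `l` one by one (each flip sets the variable to its value under `β`);
it starts at `α` and, if `l` enumerates all variables where `α` and `β` differ, ends at `β`. -/
def flipSeq {V : Type} [DecidableEq V] (α β : V → Bool) (l : List V) : List (V → Bool) :=
  l.scanl (fun g v => Function.update g v (β v)) α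

/-- The set of orderings of `α △ β` (the variables on which `α` and `β` differ);
these are in one-to-one correspondence with the irredundant reconfiguration sequences
`𝒜(α ↔ β)` from `α` to `β`, via `flipSeq`. -/
noncomputable def orders {V : Type} [Fintype V] [DecidableEq V] (α β : V → Bool) : Finset (List V) :=
  ((Finset.univ.filter fun v => α v ≠ β v).toList.permutations).toFinset

/-- The probability that a random reconfiguration sequence from `s` to `e`, uniformly
distributed over `𝒜(s ↔ γ ↔ e)` for a uniformly random assignment `γ` (equivalently, the
concatenation `σ₁ ∘ σ₂` of independent uniformly random irredundant sequences
`σ₁ ∼ 𝒜(s ↔ γ)` and `σ₂ ∼ 𝒜(γ ↔ e)`), satisfies the clause `C`, i.e. that every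
assignment in the sequence satisfies `C`. -/
noncomputable def probSatPair {k : ℕ} (C : Clause (Fin k)) (s e : Fin k → Bool) : ℝ :=
  (∑ γ : Fin k → Bool,
      (((orders s γ ×ˢ orders γ e).filter fun p =>
            (flipSeq s γ p.1 ++ flipSeq γ e p.2).all fun α => satClause α C).card : ℝ) /
        ((orders s γ ×ˢ orders γ e).card : ℝ)) / 2 ^ k

/-!
The clause mentions every variable exactly once, so exactly one assignment `x` falsifies it, and
the random sequence fails only if one of its two halves passes through `x`. A uniformly random
irredundant path from `f` to `h` can pass through `x` only if `x` lies between `f` and `h`, and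
then only if it flips the variables of `A = f △ x` before the others of `f △ h`, which happens
with probability `1 / C(|f △ h|, |A|)`. Averaging over `γ` amounts to averaging over the supersets
`D = f △ γ ⊇ A`, and `∑_{D ⊇ A} 1 / C(|D|, |A|) = ∑_{m ≥ |A|} C(k, m) / C(k, |A|) ≤ 2^k / k`. The
bound is symmetric in the two endpoints, so each half of the sequence meets `x` with probability
at most `1/k`, and the sequence satisfies the clause with probability at least
`1 - 2/k ≥ 1 - 1/(k-1) - 1/k`.
-/

open Finset
open scoped Nat

lemma Nat.self_le_choose {n a : ℕ} (ha : 0 < a) (han : a < n) : n ≤ n.choose a := by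
  induction n generalizing a with
  | zero => omega
  | succ m ih =>
    obtain ⟨b, rfl⟩ := Nat.exists_eq_add_one.2 ha
    rw [Nat.choose_succ_succ']
    rcases Nat.eq_zero_or_pos b with rfl | hb
    · simp [add_comm]
    · have := ih hb (by omega)
      have := Nat.choose_pos (show b + 1 ≤ m by omega)
      omega

lemma Nat.card_mul_sum_choose_le {n a : ℕ} (ha : 0 < a) (han : a ≤ n) :
    n * ∑ j ∈ range (n - a + 1), n.choose (a + j) ≤ 2 ^ n * n.choose a := by
  rcases han.lt_or_eq with han | rfl
  · have hsum : ∑ j ∈ range (n - a + 1), n.choose (a + j) ≤ 2 ^ n := by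
      rw [← Nat.sum_range_choose, show n - a + 1 = n + 1 - a by omega, ← sum_Ico_eq_sum_range,
        range_eq_Ico]
      exact sum_le_sum_of_subset (Ico_subset_Ico_left (Nat.zero_le a))
    calc n * ∑ j ∈ range (n - a + 1), n.choose (a + j)
        ≤ n.choose a * 2 ^ n := Nat.mul_le_mul (Nat.self_le_choose ha han) hsum
      _ = 2 ^ n * n.choose a := Nat.mul_comm _ _
  · simpa using Nat.lt_two_pow_self.le

namespace Reconfiguration

section DiffSet

variable {V : Type} [Fintype V]

-- `f △ g` in the notation of the statement.
def diffSet (f g : V → Bool) : Finset V := univ.filter fun v => f v ≠ g v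

@[simp]
lemma mem_diffSet {f g : V → Bool} {v : V} : v ∈ diffSet f g ↔ f v ≠ g v := by
  simp [diffSet]

lemma diffSet_comm (f g : V → Bool) : diffSet f g = diffSet g f := by
  ext v
  simp [ne_comm]

lemma diffSet_nonempty {f g : V → Bool} (h : f ≠ g) : (diffSet f g).Nonempty := by
  obtain ⟨v, hv⟩ := Function.ne_iff.1 h
  exact ⟨v, mem_diffSet.2 hv⟩

lemma diffSet_injective (f : V → Bool) : Function.Injective (diffSet f) := by
  intro g g' h
  funext v
  have hv := congrArg (v ∈ ·) h
  simp only [mem_diffSet, eq_iff_iff] at hv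
  revert hv
  cases f v <;> cases g v <;> cases g' v <;> simp

lemma diffSet_subset_diffSet_iff {f h x : V → Bool} :
    diffSet f x ⊆ diffSet f h ↔ ∀ v, x v = f v ∨ x v = h v := by
  simp only [LE.le, mem_diffSet]
  refine forall_congr' fun v => ?_
  cases f v <;> cases h v <;> cases x v <;> simp

variable [DecidableEq V]

lemma diffSet_eq_sdiff {f h x : V → Bool} (hx : diffSet f x ⊆ diffSet f h) :
    diffSet h x = diffSet f h \ diffSet f x := by
  ext v
  have hxv := diffSet_subset_diffSet_iff.1 hx v
  simp only [mem_diffSet, mem_sdiff]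
  revert hxv
  cases f v <;> cases h v <;> cases x v <;> simp

lemma diffSet_bijective (f : V → Bool) : Function.Bijective (diffSet f) :=
  (Fintype.bijective_iff_injective_and_card _).2
    ⟨diffSet_injective f, by simp [Fintype.card_finset]⟩

lemma mem_orders {f h : V → Bool} {l : List V} :
    l ∈ orders f h ↔ l.Perm (diffSet f h).toList := by
  rw [orders, List.mem_toFinset, List.mem_permutations]
  rfl

lemma card_orders (f h : V → Bool) : (orders f h).card = (diffSet f h).card ! := by
  rw [orders, List.toFinset_card_of_nodup (List.nodup_permutations _ (nodup_toList _)),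
    List.length_permutations, length_toList]
  rfl

end DiffSet

section FlipSeq

variable {V : Type} [DecidableEq V]

lemma mem_flipSeq_iff {f h x : V → Bool} {l : List V} :
    x ∈ flipSeq f h l ↔ ∃ n, x = fun v => if v ∈ l.take n then h v else f v := by
  induction l generalizing f with
  | nil => simp [flipSeq]
  | cons w l ih =>
    have hstep : ∀ n, (fun v => if v ∈ (w :: l).take (n + 1) then h v else f v) =
        fun v => if v ∈ l.take n then h v else Function.update f w (h w) v := by
      intro n
      funext v
      by_cases hv : v = w <;> simp [hv]
    rw [flipSeq, List.scanl_cons, List.mem_cons, ← flipSeq, ih]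
    constructor
    · rintro (rfl | ⟨n, rfl⟩)
      · exact ⟨0, by simp⟩
      · exact ⟨n + 1, (hstep n).symm⟩
    · rintro ⟨_ | n, rfl⟩
      · left; simp
      · right; exact ⟨n, hstep n⟩

variable [Fintype V]

lemma toFinset_take_of_mem_flipSeq {f h x : V → Bool} {l : List V}
    (hl : l ∈ orders f h) (hx : x ∈ flipSeq f h l) :
    (l.take (diffSet f x).card).toFinset = diffSet f x := by
  obtain ⟨n, rfl⟩ := mem_flipSeq_iff.1 hx
  have hperm := mem_orders.1 hl
  have htake : ∀ v ∈ l.take n, f v ≠ h v := fun v hv => by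
    simpa using hperm.subset (List.take_subset _ _ hv)
  have hprefix :
      diffSet f (fun v => if v ∈ l.take n then h v else f v) = (l.take n).toFinset := by
    ext v
    by_cases hv : v ∈ l.take n <;> simp [hv, htake]
  have hnodup : (l.take n).Nodup :=
    (hperm.nodup_iff.2 (nodup_toList _)).sublist (List.take_sublist _ _)
  rw [hprefix, List.toFinset_card_of_nodup hnodup, List.length_take]
  exact congrArg List.toFinset (List.take_eq_take_iff.2 (by simp))

lemma diffSet_subset_of_mem_flipSeq {f h x : V → Bool} {l : List V}
    (hl : l ∈ orders f h) (hx : x ∈ flipSeq f h l) : diffSet f x ⊆ diffSet f h := by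
  rw [← toFinset_take_of_mem_flipSeq hl hx]
  intro v hv
  simpa using (mem_orders.1 hl).subset (List.take_subset _ _ (List.mem_toFinset.1 hv))

end FlipSeq

lemma card_filter_toFinset_take_le {α : Type*} [DecidableEq α] {A D : Finset α} (hAD : A ⊆ D) :
    (D.toList.permutations.toFinset.filter fun l => (l.take A.card).toFinset = A).card ≤
      A.card ! * (D.card - A.card)! := by
  have hsplit : D.toList.Perm (A.toList ++ (D \ A).toList) := by
    refine List.perm_of_nodup_nodup_toFinset_eq (nodup_toList _)
      (List.nodup_append.2 ⟨nodup_toList _, nodup_toList _, ?_⟩) (by simp [hAD])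
    simp only [mem_toList, mem_sdiff]
    exact fun a ha b hb hab => hb.2 (hab ▸ ha)
  calc _ ≤ (A.toList.permutations.toFinset ×ˢ (D \ A).toList.permutations.toFinset).card := by
        refine card_le_card_of_injOn (fun l => (l.take A.card, l.drop A.card)) ?_ ?_
        · intro l hl
          simp only [coe_filter, List.mem_toFinset, List.mem_permutations] at hl
          obtain ⟨hlD, hlA⟩ := hl
          have htake : (l.take A.card).Perm A.toList :=
            List.perm_of_nodup_nodup_toFinset_eq
              ((hlD.nodup_iff.2 (nodup_toList _)).sublist (List.take_sublist _ _))
              (nodup_toList _) (by simp [hlA])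
          have hdrop : (l.drop A.card).Perm (D \ A).toList := by
            refine (List.perm_append_left_iff A.toList).1 ((htake.symm.append_right _).trans ?_)
            rw [List.take_append_drop]
            exact hlD.trans hsplit
          simp only [coe_product, Set.mem_prod, mem_coe, List.mem_toFinset, List.mem_permutations]
          exact ⟨htake, hdrop⟩
        · intro l₁ _ l₂ _ heq
          simp only [Prod.mk.injEq] at heq
          rw [← List.take_append_drop A.card l₁, heq.1, heq.2, List.take_append_drop]
    _ = _ := by
        simp only [card_product, List.toFinset_card_of_nodup (List.nodup_permutations _
          (nodup_toList _)), List.length_permutations, length_toList, card_sdiff_of_subset hAD]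

section Hitting

variable {V : Type} [Fintype V] [DecidableEq V]

noncomputable def hitProb (f h x : V → Bool) : ℝ :=
  ((orders f h).filter (x ∈ flipSeq f h ·)).card / (orders f h).card

-- The probability that a uniformly random ordering of `f △ h` starts with the elements of `f △ x`.
noncomputable def hitBound (f h x : V → Bool) : ℝ :=
  if diffSet f x ⊆ diffSet f h then ((diffSet f h).card.choose (diffSet f x).card : ℝ)⁻¹ else 0

lemma hitProb_le_hitBound (f h x : V → Bool) : hitProb f h x ≤ hitBound f h x := by
  unfold hitProb hitBound
  split_ifs with hsub
  · have hcount : ((orders f h).filter (x ∈ flipSeq f h ·)).card ≤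
        (diffSet f x).card ! * ((diffSet f h).card - (diffSet f x).card)! := by
      refine (card_le_card fun l hl => ?_).trans (card_filter_toFinset_take_le hsub)
      obtain ⟨hlo, hlx⟩ := mem_filter.1 hl
      exact mem_filter.2 ⟨hlo, toFinset_take_of_mem_flipSeq hlo hlx⟩
    rw [card_orders, Nat.cast_choose ℝ (card_le_card hsub), inv_div,
      div_le_div_iff_of_pos_right (by positivity)]
    exact_mod_cast hcount
  · have hnone : (orders f h).filter (x ∈ flipSeq f h ·) = ∅ :=
      filter_eq_empty_iff.2 fun l hl hx => hsub (diffSet_subset_of_mem_flipSeq hl hx)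
    simp [hnone]

lemma hitBound_comm (f h x : V → Bool) : hitBound h f x = hitBound f h x := by
  have hiff : diffSet h x ⊆ diffSet h f ↔ diffSet f x ⊆ diffSet f h := by
    simp only [diffSet_subset_diffSet_iff, or_comm]
  unfold hitBound
  by_cases hsub : diffSet f x ⊆ diffSet f h
  · rw [if_pos (hiff.2 hsub), if_pos hsub, diffSet_eq_sdiff hsub, diffSet_comm h f,
      card_sdiff_of_subset hsub, Nat.choose_symm (card_le_card hsub)]
  · rw [if_neg (mt hiff.1 hsub), if_neg hsub]

lemma hitProb_nonneg (f h x : V → Bool) : 0 ≤ hitProb f h x := by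
  unfold hitProb
  positivity

lemma one_sub_hitProb (f h x : V → Bool) :
    1 - hitProb f h x = ((orders f h).filter (x ∉ flipSeq f h ·)).card / (orders f h).card := by
  have hpos : (0 : ℝ) < (orders f h).card := by
    rw [card_orders]
    exact_mod_cast Nat.factorial_pos _
  rw [hitProb, eq_div_iff hpos.ne', sub_mul, div_mul_cancel₀ _ hpos.ne', one_mul,
    sub_eq_iff_eq_add', ← card_filter_add_card_filter_not (s := orders f h) (x ∈ flipSeq f h ·)]
  push_cast
  ring

lemma sum_inv_choose_card_le {A : Finset V} (hA : A.Nonempty) :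
    ∑ D ∈ univ.filter (A ⊆ ·), ((D.card.choose A.card : ℕ) : ℝ)⁻¹ ≤
      2 ^ Fintype.card V / Fintype.card V := by
  set n := Fintype.card V
  set a := A.card
  have ha : 0 < a := hA.card_pos
  have han : a ≤ n := card_le_univ A
  have hsupersets : univ.filter (A ⊆ ·) = (univ \ A).powerset.image (A ∪ ·) := by
    rw [← Icc_eq_image_powerset (subset_univ A)]
    ext D
    simp
  have hdisj : ∀ T ∈ (univ \ A).powerset, Disjoint A T := fun T hT =>
    disjoint_of_subset_right (mem_powerset.1 hT) disjoint_sdiff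
  have hterm : ∀ j ∈ range (n - a + 1),
      (n - a).choose j • ((a + j).choose a : ℝ)⁻¹ = n.choose (a + j) / n.choose a := by
    intro j hj
    have hid := Nat.choose_mul (n := n) (k := a + j) (s := a) (Nat.le_add_right _ _)
    rw [Nat.add_sub_cancel_left] at hid
    have hpos : (0 : ℝ) < (a + j).choose a := by exact_mod_cast Nat.choose_pos (by omega)
    have hpos' : (0 : ℝ) < n.choose a := by exact_mod_cast Nat.choose_pos han
    rw [nsmul_eq_mul, ← div_eq_mul_inv, div_eq_div_iff hpos.ne' hpos'.ne']
    exact_mod_cast (hid.trans (Nat.mul_comm _ _)).symm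
  rw [hsupersets, sum_image fun T hT T' hT' hTT' => by
      rw [← union_sdiff_cancel_left (hdisj T hT), hTT', union_sdiff_cancel_left (hdisj T' hT')]]
  rw [sum_congr rfl fun T hT => by rw [card_union_of_disjoint (hdisj T hT)],
    sum_powerset_apply_card (fun m => ((a + m).choose a : ℝ)⁻¹), card_univ_sdiff,
    sum_congr rfl hterm, ← sum_div,
    div_le_div_iff₀ (by exact_mod_cast Nat.choose_pos han) (by exact_mod_cast ha.trans_le han)]
  exact_mod_cast (Nat.mul_comm _ _).trans_le (Nat.card_mul_sum_choose_le ha han)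

lemma sum_hitBound_le {f x : V → Bool} (hfx : f ≠ x) :
    ∑ γ, hitBound f γ x ≤ 2 ^ Fintype.card V / Fintype.card V := by
  set g : Finset V → ℝ := fun D =>
    if diffSet f x ⊆ D then ((D.card.choose (diffSet f x).card : ℕ) : ℝ)⁻¹ else 0
  calc ∑ γ, hitBound f γ x = ∑ D, g D := (diffSet_bijective f).sum_comp g
    _ = _ := (sum_filter _ _).symm
    _ ≤ _ := sum_inv_choose_card_le (diffSet_nonempty hfx)

end Hitting

section Clauses

variable {V : Type}

lemma satClause_eq_false_iff {α : V → Bool} {C : Clause V} :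
    satClause α C = false ↔ ∀ l ∈ C, α l.1 ≠ l.2 := by
  simp [satClause, List.any_eq_false]

variable [DecidableEq V]

def falsifier (C : Clause V) : V → Bool := fun v => decide ((v, false) ∈ C)

lemma satClause_falsifier {C : Clause V} (hnd : (C.map Prod.fst).Nodup) :
    satClause (falsifier C) C = false := by
  rw [satClause_eq_false_iff]
  rintro ⟨v, _ | _⟩ hvb
  · simpa [falsifier] using hvb
  · have hvf : (v, false) ∉ C := fun hvf => by
      simpa using List.inj_on_of_nodup_map hnd hvb hvf rfl
    simpa [falsifier] using hvf

lemma eq_falsifier_of_satClause_eq_false {C : Clause V} (hcov : ∀ v, ∃ b, (v, b) ∈ C)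
    {α : V → Bool} (hα : satClause α C = false) : α = falsifier C := by
  rw [satClause_eq_false_iff] at hα
  funext v
  by_cases hvf : (v, false) ∈ C
  · simpa [falsifier, hvf] using hα _ hvf
  · obtain ⟨_ | _, hvb⟩ := hcov v
    · exact absurd hvb hvf
    · simpa [falsifier, hvf] using hα _ hvb

lemma exists_mem_of_length_eq_card [Fintype V] {C : Clause V}
    (hw : C.length = Fintype.card V) (hnd : (C.map Prod.fst).Nodup) (v : V) :
    ∃ b, (v, b) ∈ C := by
  have huniv : (C.map Prod.fst).toFinset = univ :=
    eq_univ_of_card _ (by rw [List.toFinset_card_of_nodup hnd, List.length_map, hw])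
  obtain ⟨⟨w, b⟩, hwb, rfl⟩ := List.mem_map.1 (List.mem_toFinset.1 (huniv ▸ mem_univ v))
  exact ⟨b, hwb⟩

end Clauses

variable {V : Type} [Fintype V] [DecidableEq V]

lemma one_sub_hitProb_sub_hitProb_le {C : Clause V} {x : V → Bool}
    (hx : ∀ α, satClause α C = false → α = x) (s γ e : V → Bool) :
    1 - hitProb s γ x - hitProb γ e x ≤
      (((orders s γ ×ˢ orders γ e).filter fun p =>
          (flipSeq s γ p.1 ++ flipSeq γ e p.2).all fun α => satClause α C).card : ℝ) /
        (orders s γ ×ˢ orders γ e).card := by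
  have hmiss :
      (orders s γ).filter (x ∉ flipSeq s γ ·) ×ˢ (orders γ e).filter (x ∉ flipSeq γ e ·) ⊆
        (orders s γ ×ˢ orders γ e).filter fun p =>
          (flipSeq s γ p.1 ++ flipSeq γ e p.2).all fun α => satClause α C := by
    rintro ⟨l₁, l₂⟩ hl
    simp only [mem_product, mem_filter] at hl
    refine mem_filter.2 ⟨mem_product.2 ⟨hl.1.1, hl.2.1⟩, List.all_eq_true.2 fun α hα => ?_⟩
    by_contra hsat
    obtain rfl := hx α (by simpa using hsat)
    rcases List.mem_append.1 hα with h | h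
    exacts [hl.1.2 h, hl.2.2 h]
  have h₁ := hitProb_nonneg s γ x
  have h₂ := hitProb_nonneg γ e x
  calc 1 - hitProb s γ x - hitProb γ e x ≤ (1 - hitProb s γ x) * (1 - hitProb γ e x) := by
        nlinarith
    _ = (((orders s γ).filter (x ∉ flipSeq s γ ·) ×ˢ
          (orders γ e).filter (x ∉ flipSeq γ e ·)).card : ℝ) / (orders s γ ×ˢ orders γ e).card := by
        rw [one_sub_hitProb, one_sub_hitProb, card_product, card_product, Nat.cast_mul,
          Nat.cast_mul, div_mul_div_comm]
    _ ≤ _ := div_le_div_of_nonneg_right (by exact_mod_cast card_le_card hmiss) (by positivity)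

lemma one_sub_two_div_le_probSatPair {k : ℕ} {C : Clause (Fin k)} {x : Fin k → Bool}
    (hx : ∀ α, satClause α C = false → α = x) {s e : Fin k → Bool} (hs : s ≠ x) (he : e ≠ x) :
    1 - 2 / k ≤ probSatPair C s e := by
  have hsum₁ : ∑ γ, hitProb s γ x ≤ 2 ^ k / k := by
    simpa using (sum_le_sum fun γ _ => hitProb_le_hitBound s γ x).trans (sum_hitBound_le hs)
  have hsum₂ : ∑ γ, hitProb γ e x ≤ 2 ^ k / k := by
    simpa using (sum_le_sum fun γ _ => (hitProb_le_hitBound γ e x).trans_eq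
      (hitBound_comm e γ x)).trans (sum_hitBound_le he)
  have hpointwise : ∑ γ : Fin k → Bool, (1 - hitProb s γ x - hitProb γ e x) =
      2 ^ k - ∑ γ, hitProb s γ x - ∑ γ, hitProb γ e x := by
    simp [sum_sub_distrib]
  rw [probSatPair, le_div_iff₀ (by positivity)]
  calc (1 - 2 / k) * 2 ^ k = (2 : ℝ) ^ k - 2 ^ k / k - 2 ^ k / k := by ring
    _ ≤ ∑ γ : Fin k → Bool, (1 - hitProb s γ x - hitProb γ e x) := by rw [hpointwise]; linarith
    _ ≤ _ := sum_le_sum fun γ _ => one_sub_hitProb_sub_hitProb_le hx s γ e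

end Reconfiguration

open Reconfiguration

/-- Let `k ≥ 3`, let `C` be a clause of width `k` over `k` distinct
variables, and let `s`, `e` be satisfying assignments for `C`. Draw a uniformly random
assignment `γ` and, conditioned on `γ`, a uniformly random reconfiguration sequence `σ` from
`𝒜(s ↔ γ ↔ e)`. Then the probability that `σ` satisfies `C` is at least
`1 - 1/(k-1) - 1/k`. -/
theorem stmt1 {k : ℕ} (hk : 3 ≤ k) (C : Clause (Fin k))
    (hw : C.length = k) (hnd : (C.map Prod.fst).Nodup)
    (s e : Fin k → Bool) (hs : satClause s C) (he : satClause e C) :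
    1 - 1 / ((k : ℝ) - 1) - 1 / (k : ℝ) ≤ probSatPair C s e := by
  have hcover := exists_mem_of_length_eq_card (by rw [hw, Fintype.card_fin]) hnd
  have hfalse := satClause_falsifier hnd
  have hsx : s ≠ falsifier C := by rintro rfl; simp [hfalse] at hs
  have hex : e ≠ falsifier C := by rintro rfl; simp [hfalse] at he
  have hk' : (3 : ℝ) ≤ k := by exact_mod_cast hk
  have hmono : 1 / (k : ℝ) ≤ 1 / ((k : ℝ) - 1) :=
    one_div_le_one_div_of_le (by linarith) (by linarith)
  calc 1 - 1 / ((k : ℝ) - 1) - 1 / k ≤ 1 - 2 / k := by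
        linarith [show (2 : ℝ) / k = 1 / k + 1 / k by ring]
    _ ≤ probSatPair C s e :=
        one_sub_two_div_le_probSatPair (fun α => eq_falsifier_of_satClause_eq_false hcover) hsx hex
end

section
/- Let C = ℓ_1 ∨ ⋯ ∨ ℓ_k be a clause of width k ≥ 3 over k distinct variables V = {x_1, …, x_k}, and let α_start, α_end, α'_start, α'_end : V → {0,1} be satisfying assignments for C such that for each literal ℓ_i of C, α_start(ℓ_i) ≤ α'_start(ℓ_i) and α_end(ℓ_i) ≤ α'_end(ℓ_i) (where α(ℓ) denotes the truth value of literal ℓ under α). Let γ : V → {0,1} be a uniformly random assignment and, conditioned on γ, let σ_1 ∼ 𝒜(α_start ↔ γ), σ_2 ∼ 𝒜(γ ↔ α_end), σ'_1 ∼ 𝒜(α'_start ↔ γ), σ'_2 ∼ 𝒜(γ ↔ α'_end) be independent uniformly random irredundant reconfiguration sequences. Then P[σ_1 ∘ σ_2 satisfies C] ≤ P[σ'_1 ∘ σ'_2 satisfies C]. -/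
/-!
A clause of width `k` over `k` variables is falsified by exactly one assignment `ζ`, so a
reconfiguration sequence satisfies it iff it avoids `ζ`; given `γ`, the two halves are
independent. A uniformly random irredundant sequence from `a` to `b` can only visit `ζ` if `ζ`
lies in the subcube spanned by `a` and `b`, and then it does so iff its first `p = d(a, ζ)` flips
are the variables where `a` and `ζ` differ: this has probability
`p! q! / (p + q)! = 1 / C(p + q, p)`, where `q = d(b, ζ)`. The hypotheses say that `s'`, `e'`
agree with `ζ` only where `s`, `e` do. Hence if `ζ` lies in the subcube of the new endpoints it
lies in that of the old ones, and `p`, `q` can only grow, so for every `γ` the probability of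
avoiding `ζ` can only grow.
-/

open Finset Nat

namespace List

variable {α β : Type*}

theorem mem_scanl_iff {f : β → α → β} {b x : β} {l : List α} :
    x ∈ l.scanl f b ↔ ∃ n, (l.take n).foldl f b = x := by
  simp only [mem_iff_getElem, getElem_scanl, length_scanl]
  refine ⟨fun ⟨n, _, h⟩ => ⟨n, h⟩, fun ⟨n, h⟩ => ⟨min n l.length, by omega, ?_⟩⟩
  rwa [← take_eq_take_min]

variable [DecidableEq α]

theorem foldl_update_eq_piecewise (a b : α → β) (m : List α) :
    m.foldl (fun g v => Function.update g v (b v)) a = m.toFinset.piecewise b a := by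
  induction m generalizing a with
  | nil => ext; simp [Finset.piecewise]
  | cons v m ih =>
    ext w
    rw [foldl_cons, ih]
    by_cases hw : w = v <;> by_cases hm : w ∈ m <;> simp [Finset.piecewise, hw, hm]

theorem mem_permutations_toList_iff {s : Finset α} {l : List α} :
    l ∈ s.toList.permutations ↔ l.Nodup ∧ l.toFinset = s := by
  rw [mem_permutations]
  refine ⟨fun h => ⟨h.nodup_iff.mpr s.nodup_toList, ?_⟩, fun ⟨hl, hs⟩ => ?_⟩
  · rw [toFinset_eq_of_perm _ _ h, toList_toFinset]
  · exact perm_of_nodup_nodup_toFinset_eq hl s.nodup_toList (by rw [hs, toList_toFinset])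

theorem card_permutations_toList (s : Finset α) : #s.toList.permutations.toFinset = (#s)! := by
  rw [toFinset_card_of_nodup (nodup_permutations _ s.nodup_toList), length_permutations,
    length_toList]

theorem card_permutations_toList_filter_take {P D : Finset α} (hPD : P ⊆ D) :
    #{l ∈ D.toList.permutations.toFinset | (l.take #P).toFinset = P} = (#P)! * (#D - #P)! := by
  rw [← card_sdiff_of_subset hPD, ← card_permutations_toList, ← card_permutations_toList,
    ← card_product]
  refine card_nbij' (fun l => (l.take #P, l.drop #P)) (fun q => q.1 ++ q.2) ?_ ?_ ?_ ?_
  · intro l hl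
    simp only [coe_filter, Set.mem_ofPred_eq, mem_toFinset, mem_permutations_toList_iff] at hl
    obtain ⟨⟨hnd, hD⟩, hP⟩ := hl
    rw [← take_append_drop #P l, nodup_append'] at hnd
    rw [← take_append_drop #P l, toFinset_append, hP] at hD
    simp only [coe_product, Set.mem_prod, mem_coe, mem_toFinset, mem_permutations_toList_iff]
    have hdisj := disjoint_toFinset_iff_disjoint.mpr hnd.2.2
    rw [hP] at hdisj
    exact ⟨⟨hnd.1, hP⟩, hnd.2.1, by rw [← hD, union_sdiff_cancel_left hdisj]⟩
  · rintro ⟨l₁, l₂⟩ h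
    simp only [coe_product, Set.mem_prod, mem_coe, mem_toFinset, mem_permutations_toList_iff] at h
    obtain ⟨⟨hnd₁, hP⟩, hnd₂, hQ⟩ := h
    have hlen : l₁.length = #P := by rw [← hP, toFinset_card_of_nodup hnd₁]
    simp only [coe_filter, Set.mem_ofPred_eq, mem_toFinset, mem_permutations_toList_iff,
      take_left' hlen, hP, toFinset_append, hQ, union_sdiff_of_subset hPD, and_true]
    exact hnd₁.append hnd₂ (disjoint_toFinset_iff_disjoint.mp (hP ▸ hQ ▸ disjoint_sdiff))
  · intro l _
    exact take_append_drop _ l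
  · rintro ⟨l₁, l₂⟩ h
    simp only [coe_product, Set.mem_prod, mem_coe, mem_toFinset, mem_permutations_toList_iff] at h
    have hlen : l₁.length = #P := by rw [← h.1.2, toFinset_card_of_nodup h.1.1]
    simp [take_left' hlen, drop_left' hlen]

end List

theorem hammingDist_eq_add_of_forall_eq_or_eq {ι : Type*} {β : ι → Type*} [Fintype ι]
    [∀ i, DecidableEq (β i)] {x y z : ∀ i, β i} (h : ∀ i, x i = z i ∨ y i = z i) :
    hammingDist x y = hammingDist x z + hammingDist y z := by
  simp only [hammingDist, card_filter, ← sum_add_distrib]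
  refine sum_congr rfl fun i _ => ?_
  rcases h i with h | h <;> simp [h, eq_comm]

theorem Nat.add_choose_le_add_choose {p q p' q' : ℕ} (hp : p ≤ p') (hq : q ≤ q') :
    (p + q).choose p ≤ (p' + q').choose p' :=
  calc (p + q).choose p ≤ (p + q').choose p := choose_le_choose p (by omega)
    _ = (p + q').choose q' := choose_symm_add
    _ ≤ (p' + q').choose q' := choose_le_choose q' (by omega)
    _ = (p' + q').choose p' := choose_symm_add.symm

section Reconfiguration

variable {V : Type} [DecidableEq V]

theorem mem_flipSeq_iff_exists_take {a b ζ : V → Bool} {l : List V} :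
    ζ ∈ flipSeq a b l ↔ ∃ n, (l.take n).toFinset.piecewise b a = ζ := by
  simp only [flipSeq, List.mem_scanl_iff, List.foldl_update_eq_piecewise]

def Between (a b ζ : V → Bool) : Prop := ∀ v, a v = ζ v ∨ b v = ζ v

variable [Fintype V]

def diffVars (a b : V → Bool) : Finset V := {v | a v ≠ b v}

theorem card_orders (a b : V → Bool) : #(orders a b) = (hammingDist a b)! :=
  List.card_permutations_toList _

theorem piecewise_eq_iff_between {a b ζ : V → Bool} {S : Finset V} (hS : S ⊆ diffVars a b) :
    S.piecewise b a = ζ ↔ Between a b ζ ∧ S = diffVars a ζ := by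
  constructor
  · rintro rfl
    refine ⟨fun v => ?_, ?_⟩
    · by_cases hv : v ∈ S <;> simp [hv]
    · ext v
      by_cases hv : v ∈ S
      · simpa [diffVars, hv] using (mem_filter.mp (hS hv)).2
      · simp [diffVars, hv]
  · rintro ⟨hbet, rfl⟩
    ext v
    by_cases hv : v ∈ diffVars a ζ
    · rw [piecewise_eq_of_mem _ _ _ hv]
      exact (hbet v).resolve_left (mem_filter.mp hv).2
    · rw [piecewise_eq_of_notMem _ _ _ hv]
      simpa [diffVars] using hv

theorem mem_flipSeq_iff {a b ζ : V → Bool} {l : List V} (hl : l ∈ orders a b) :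
    ζ ∈ flipSeq a b l ↔
      Between a b ζ ∧ (l.take (hammingDist a ζ)).toFinset = diffVars a ζ := by
  obtain ⟨hnd, hD⟩ := List.mem_permutations_toList_iff.mp (List.mem_toFinset.mp hl)
  have hsub (n : ℕ) : (l.take n).toFinset ⊆ diffVars a b := by
    rw [diffVars, ← hD]
    exact fun v hv => List.mem_toFinset.mpr (List.mem_of_mem_take (List.mem_toFinset.mp hv))
  rw [mem_flipSeq_iff_exists_take]
  constructor
  · rintro ⟨n, h⟩
    obtain ⟨hbet, hS⟩ := (piecewise_eq_iff_between (hsub n)).mp h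
    have hlen : hammingDist a ζ = min n l.length := by
      rw [hammingDist, ← diffVars, ← hS,
        List.toFinset_card_of_nodup (hnd.sublist (List.take_sublist n l)), List.length_take]
    rw [hlen, ← List.take_eq_take_min]
    exact ⟨hbet, hS⟩
  · rintro ⟨hbet, hS⟩
    exact ⟨_, (piecewise_eq_iff_between (hsub _)).mpr ⟨hbet, hS⟩⟩

theorem card_filter_mem_flipSeq_of_between {a b ζ : V → Bool} (h : Between a b ζ) :
    #{l ∈ orders a b | ζ ∈ flipSeq a b l} = (hammingDist a ζ)! * (hammingDist b ζ)! := by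
  rw [filter_congr fun l hl => (mem_flipSeq_iff hl).trans (and_iff_right h)]
  have hsub : diffVars a ζ ⊆ diffVars a b := fun v hv => by
    simp only [diffVars, mem_filter, mem_univ, true_and] at hv ⊢
    exact fun hab => hv (hab.trans ((h v).resolve_left hv))
  have hcount : #{l ∈ orders a b | (l.take (hammingDist a ζ)).toFinset = diffVars a ζ} =
      (hammingDist a ζ)! * (hammingDist a b - hammingDist a ζ)! :=
    List.card_permutations_toList_filter_take hsub
  rw [hcount, hammingDist_eq_add_of_forall_eq_or_eq h, Nat.add_sub_cancel_left]

noncomputable def avoidProb (a b ζ : V → Bool) : ℝ :=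
  #{l ∈ orders a b | ζ ∉ flipSeq a b l} / #(orders a b)

theorem avoidProb_of_not_between {a b ζ : V → Bool} (h : ¬Between a b ζ) :
    avoidProb a b ζ = 1 := by
  rw [avoidProb, filter_true_of_mem (p := fun l => ζ ∉ flipSeq a b l)
    fun l hl hζ => h ((mem_flipSeq_iff hl).mp hζ).1, card_orders]
  exact div_self (Nat.cast_ne_zero.mpr (factorial_ne_zero _))

theorem avoidProb_of_between {a b ζ : V → Bool} (h : Between a b ζ) :
    avoidProb a b ζ =
      1 - (((hammingDist a ζ + hammingDist b ζ).choose (hammingDist a ζ) : ℕ) : ℝ)⁻¹ := by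
  have hsplit : (#{l ∈ orders a b | ζ ∉ flipSeq a b l} : ℝ) =
      #(orders a b) - #{l ∈ orders a b | ζ ∈ flipSeq a b l} := by
    rw [← card_filter_add_card_filter_not (s := orders a b) (fun l => ζ ∈ flipSeq a b l)]
    push_cast
    ring
  rw [avoidProb, hsplit, sub_div, card_filter_mem_flipSeq_of_between h, card_orders,
    hammingDist_eq_add_of_forall_eq_or_eq h,
    div_self (Nat.cast_ne_zero.mpr (factorial_ne_zero _)), Nat.cast_add_choose, inv_div,
    Nat.cast_mul]

theorem avoidProb_nonneg (a b ζ : V → Bool) : 0 ≤ avoidProb a b ζ := by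
  unfold avoidProb
  positivity

theorem avoidProb_le_one (a b ζ : V → Bool) : avoidProb a b ζ ≤ 1 :=
  div_le_one_of_le₀ (Nat.cast_le.mpr (card_filter_le _ _)) (Nat.cast_nonneg _)

theorem avoidProb_mono {a b a' b' ζ : V → Bool} (ha : ∀ v, a' v = ζ v → a v = ζ v)
    (hb : ∀ v, b' v = ζ v → b v = ζ v) : avoidProb a b ζ ≤ avoidProb a' b' ζ := by
  by_cases h' : Between a' b' ζ
  · have h : Between a b ζ := fun v => (h' v).imp (ha v) (hb v)
    have hdist {c c' : V → Bool} (hc : ∀ v, c' v = ζ v → c v = ζ v) :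
        hammingDist c ζ ≤ hammingDist c' ζ :=
      card_le_card fun v hv => by
        simp only [mem_filter, mem_univ, true_and] at hv ⊢
        exact mt (hc v) hv
    rw [avoidProb_of_between h, avoidProb_of_between h']
    gcongr
    · exact Nat.cast_pos.mpr (choose_pos (Nat.le_add_right _ _))
    · exact Nat.add_choose_le_add_choose (hdist ha) (hdist hb)
  · exact (avoidProb_le_one a b ζ).trans (avoidProb_of_not_between h').ge

end Reconfiguration

section Clauses

variable {V : Type}

theorem satClause_eq_true_iff {α : V → Bool} {C : Clause V} :
    satClause α C = true ↔ ∃ l ∈ C, α l.1 = l.2 := by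
  simp [satClause]

theorem exists_falsifier {C : Clause V} (hnd : (C.map Prod.fst).Nodup) :
    ∃ ζ : V → Bool, ∀ l ∈ C, ζ l.1 = !l.2 := by
  classical
  refine ⟨fun v => if h : ∃ l ∈ C, l.1 = v then !h.choose.2 else false, fun l hl => ?_⟩
  have h : ∃ l' ∈ C, l'.1 = l.1 := ⟨l, hl, rfl⟩
  obtain ⟨hmem, hfst⟩ := h.choose_spec
  simp only [dif_pos h, List.inj_on_of_nodup_map hnd hmem hl hfst]

theorem exists_mem_fst_eq_of_length_eq_card [Fintype V] {C : Clause V}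
    (hw : C.length = Fintype.card V) (hnd : (C.map Prod.fst).Nodup) (v : V) :
    ∃ l ∈ C, l.1 = v := by
  classical
  have hv : v ∈ C.map Prod.fst := by
    rw [← List.mem_toFinset, eq_univ_of_card (C.map Prod.fst).toFinset
      (by rw [List.toFinset_card_of_nodup hnd, List.length_map, hw])]
    exact mem_univ v
  simpa using hv

theorem satClause_eq_true_iff_ne {C : Clause V} {ζ : V → Bool}
    (hcover : ∀ v, ∃ l ∈ C, l.1 = v) (hζ : ∀ l ∈ C, ζ l.1 = !l.2) (α : V → Bool) :
    satClause α C = true ↔ α ≠ ζ := by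
  rw [satClause_eq_true_iff, Ne, funext_iff, not_forall]
  constructor
  · rintro ⟨l, hl, h⟩
    exact ⟨l.1, by simp [hζ l hl, h]⟩
  · rintro ⟨v, hv⟩
    obtain ⟨l, hl, rfl⟩ := hcover v
    exact ⟨l, hl, by simpa [hζ l hl] using hv⟩

variable [Fintype V] [DecidableEq V]

theorem card_filter_all_satClause_div {C : Clause V} {ζ : V → Bool}
    (hsat : ∀ α, satClause α C = true ↔ α ≠ ζ) (s e γ : V → Bool) :
    (#{p ∈ orders s γ ×ˢ orders γ e |
        (flipSeq s γ p.1 ++ flipSeq γ e p.2).all fun α => satClause α C} : ℝ) /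
      #(orders s γ ×ˢ orders γ e) = avoidProb s γ ζ * avoidProb γ e ζ := by
  have hall (L : List (V → Bool)) : (L.all fun α => satClause α C) = true ↔ ζ ∉ L := by
    simp [hsat, List.forall_mem_ne']
  simp only [List.all_append, Bool.and_eq_true, hall]
  rw [filter_product (fun l => ζ ∉ flipSeq s γ l) (fun l => ζ ∉ flipSeq γ e l),
    card_product, card_product, Nat.cast_mul, Nat.cast_mul, mul_div_mul_comm]
  rfl

end Clauses

theorem stmt2_general {k : ℕ} (C : Clause (Fin k))
    (hw : C.length = k) (hnd : (C.map Prod.fst).Nodup)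
    (s e s' e' : Fin k → Bool)
    (hmono_s : ∀ l ∈ C, s l.1 = l.2 → s' l.1 = l.2)
    (hmono_e : ∀ l ∈ C, e l.1 = l.2 → e' l.1 = l.2) :
    probSatPair C s e ≤ probSatPair C s' e' := by
  obtain ⟨ζ, hζ⟩ := exists_falsifier hnd
  have hcover := exists_mem_fst_eq_of_length_eq_card (hw.trans (Fintype.card_fin k).symm) hnd
  have hmono {a a' : Fin k → Bool} (h : ∀ l ∈ C, a l.1 = l.2 → a' l.1 = l.2) (v : Fin k) :
      a' v = ζ v → a v = ζ v := by
    obtain ⟨l, hl, rfl⟩ := hcover v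
    simp only [hζ l hl, Bool.eq_not_iff]
    exact mt (h l hl)
  unfold probSatPair
  simp only [card_filter_all_satClause_div (satClause_eq_true_iff_ne hcover hζ)]
  refine div_le_div_of_nonneg_right (sum_le_sum fun γ _ => ?_) (by positivity)
  exact mul_le_mul (avoidProb_mono (hmono hmono_s) fun _ => id)
    (avoidProb_mono (fun _ => id) (hmono hmono_e)) (avoidProb_nonneg _ _ _)
    (avoidProb_nonneg _ _ _)

/-- Monotonicity: if each literal of `C` true under `s` (resp. `e`) stays
true under `s'` (resp. `e'`), then the probability that the random concatenated sequence
`σ₁ ∘ σ₂` (through a uniformly random `γ`) satisfies `C` can only increase when the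
endpoints are replaced by `s'`, `e'`. -/
theorem stmt2 {k : ℕ} (hk : 3 ≤ k) (C : Clause (Fin k))
    (hw : C.length = k) (hnd : (C.map Prod.fst).Nodup)
    (s e s' e' : Fin k → Bool)
    (hs : satClause s C) (he : satClause e C)
    (hs' : satClause s' C) (he' : satClause e' C)
    (hmono_s : ∀ l ∈ C, s l.1 = l.2 → s' l.1 = l.2)
    (hmono_e : ∀ l ∈ C, e l.1 = l.2 → e' l.1 = l.2) :
    probSatPair C s e ≤ probSatPair C s' e' :=
  stmt2_general C hw hnd s e s' e' hmono_s hmono_e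
end
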